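/- For each n, let P_n(z) = a_n∏_{k=1}^n (z − α_{k,n}) be a polynomial of degree exactly n with integer coefficients and simple zeros. Assume: (i) lim_{n→∞} |a_n|^{1/n} = 1; (ii') there exists a single R > 1 such that lim_{n→∞} (∏_{k : |α_{k,n}| ≥ R} |α_{k,n}|)^{1/n} = 1; and (iii) for every continuous compactly supported φ : ℂ → ℝ, (1/n)∑_{k=1}^n φ(α_{k,n}) → ∫ φ dμ_D. Then lim_{n→∞} M(P_n)^{1/n} = 1. -/

import Mathlib

/-!
Since `|a_n| ≥ 1` and every factor `max(1, |α|)` is at least `1`, we have `M(P_n)^{1/n} ≥ 1`.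
For the upper bound let `R > 1` be the radius of (ii') and fix `s > 1`. Each factor
`max(1, |α|)` is at most `s`, times `R` if `α` lies in the annulus `s ≤ |α| < R`, times `|α|`
if `|α| ≥ R`; hence
`M(P_n)^{1/n} ≤ |a_n|^{1/n} · s · R^{k_n/n} · (∏_{|α| ≥ R} |α|)^{1/n}`, where `k_n` counts the
roots in the annulus. Testing the equidistribution of the roots against a continuous compactly
supported function that vanishes on the unit circle and is `≥ 1` on the annulus gives
`k_n/n → 0`, so the right-hand side tends to `s`.
-/

open Polynomial Filter Real Topology
open scoped Classical

/-- The multiset of complex roots of an integer polynomial. -/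
noncomputable def croots (P : Polynomial ℤ) : Multiset ℂ :=
  (P.map (Int.castRingHom ℂ)).roots

/-- Integral of `φ` against the normalized arclength measure on the unit circle. -/
noncomputable def circleAvg (φ : ℂ → ℝ) : ℝ :=
  (2 * Real.pi)⁻¹ * ∫ t in (0:ℝ)..(2 * Real.pi), φ (Complex.exp (t * Complex.I))

/-- Mahler measure of an integer polynomial: `|a_n| ∏ max(1,|α_k|)`. -/
noncomputable def mahlerMeas (P : Polynomial ℤ) : ℝ :=
  |(P.leadingCoeff : ℝ)| * ((croots P).map (fun α => max 1 ‖α‖)).prod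

/-- The product `∏_{k : |α_k| ≥ R} |α_k|` over the roots of `P` (empty product = 1). -/
noncomputable def tailProd (P : Polynomial ℤ) (R : ℝ) : ℝ :=
  ((croots P).map (fun α => if R ≤ ‖α‖ then ‖α‖ else 1)).prod

namespace Multiset

variable {α : Type*}

theorem prod_map_ite_eq_pow_countP {M : Type*} [CommMonoid M] (p : α → Prop) [DecidablePred p]
    (c : M) (m : Multiset α) :
    (m.map fun a => if p a then c else 1).prod = c ^ m.countP p := by
  induction m using Multiset.induction_on with
  | empty => simp
  | cons a m ih => by_cases h : p a <;> simp [ih, h, pow_succ, mul_comm]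

theorem countP_le_sum_map {R : Type*} [Semiring R] [PartialOrder R] [IsOrderedRing R]
    (p : α → Prop) [DecidablePred p] {φ : α → R} (hφ : ∀ a, 0 ≤ φ a)
    (hp : ∀ a, p a → 1 ≤ φ a) (m : Multiset α) :
    (m.countP p : R) ≤ (m.map φ).sum := by
  induction m using Multiset.induction_on with
  | empty => simp
  | cons a m ih =>
    rw [countP_cons, map_cons, sum_cons, Nat.cast_add, add_comm]
    by_cases h : p a
    · simpa [h] using add_le_add (hp a h) ih
    · simpa [h] using add_le_add (hφ a) ih

end Multiset

theorem tendsto_nhds_one_of_forall_le {β : Type*} {l : Filter β} {u : β → ℝ}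
    (hlow : ∀ᶠ b in l, 1 ≤ u b)
    (hup : ∀ s > 1, ∃ v : β → ℝ, Tendsto v l (𝓝 s) ∧ ∀ᶠ b in l, u b ≤ v b) :
    Tendsto u l (𝓝 1) := by
  refine tendsto_order.2 ⟨fun a ha => hlow.mono fun b hb => ha.trans_le hb, fun a ha => ?_⟩
  obtain ⟨v, hv, huv⟩ := hup ((1 + a) / 2) (by linarith)
  filter_upwards [huv, hv.eventually_lt_const (by linarith : (1 + a) / 2 < a)] with b h1 h2
  exact h1.trans_lt h2

theorem max_one_le_mul_ite {s R x : ℝ} (hs : 1 ≤ s) (hR : 1 ≤ R) :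
    max 1 x ≤ s * (if s ≤ x ∧ x < R then R else 1) * (if R ≤ x then x else 1) := by
  split_ifs with h₁ h₂ h₂
  · linarith [h₁.2]
  · rw [mul_one, max_eq_right (by linarith [h₁.1])]
    nlinarith [h₁.2]
  · rw [mul_one, max_eq_right (by linarith)]
    nlinarith [h₂]
  · rw [mul_one, mul_one]
    exact max_le hs (by by_contra! hx; exact h₁ ⟨hx.le, lt_of_not_ge h₂⟩)

theorem card_croots {P : Polynomial ℤ} {n : ℕ} (h : P.degree = n) :
    Multiset.card (croots P) = n := by
  have hmap : (P.map (Int.castRingHom ℂ)).natDegree = n := natDegree_eq_of_degree_eq_some <| by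
    rwa [degree_map_eq_of_injective (RingHom.injective_int _)]
  rw [croots, ← hmap]
  exact splits_iff_card_roots.mp (IsAlgClosed.splits _)

theorem one_le_abs_leadingCoeff {P : Polynomial ℤ} (hP : P ≠ 0) : 1 ≤ |(P.leadingCoeff : ℝ)| := by
  exact_mod_cast Int.one_le_abs (leadingCoeff_ne_zero.mpr hP)

theorem one_le_mahlerMeas {P : Polynomial ℤ} (hP : P ≠ 0) : 1 ≤ mahlerMeas P := by
  refine one_le_mul_of_one_le_of_one_le (one_le_abs_leadingCoeff hP) (Multiset.one_le_prod ?_)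
  simp only [Multiset.mem_map]
  rintro _ ⟨α, -, rfl⟩
  exact le_max_left _ _

theorem tailProd_nonneg (P : Polynomial ℤ) (R : ℝ) : 0 ≤ tailProd P R := by
  refine Multiset.prod_nonneg fun _ hx => ?_
  obtain ⟨α, -, rfl⟩ := Multiset.mem_map.mp hx
  split_ifs
  exacts [norm_nonneg α, zero_le_one]

noncomputable def annulusCount (P : Polynomial ℤ) (s R : ℝ) : ℕ :=
  (croots P).countP fun α => s ≤ ‖α‖ ∧ ‖α‖ < R

theorem mahlerMeas_le {P : Polynomial ℤ} {s R : ℝ} (hs : 1 ≤ s) (hR : 1 ≤ R) :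
    mahlerMeas P ≤
      |(P.leadingCoeff : ℝ)| * (s ^ Multiset.card (croots P) * R ^ annulusCount P s R *
        tailProd P R) := by
  refine mul_le_mul_of_nonneg_left ?_ (abs_nonneg _)
  calc ((croots P).map fun α => max 1 ‖α‖).prod
      ≤ ((croots P).map fun α => s * (if s ≤ ‖α‖ ∧ ‖α‖ < R then R else 1) *
          (if R ≤ ‖α‖ then ‖α‖ else 1)).prod :=
        Multiset.prod_map_le_prod_map₀ _ _ (fun _ _ => zero_le_one.trans (le_max_left _ _))
          (fun _ _ => max_one_le_mul_ite hs hR)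
    _ = _ := by
        rw [Multiset.prod_map_mul, Multiset.prod_map_mul, Multiset.map_const',
          Multiset.prod_replicate, Multiset.prod_map_ite_eq_pow_countP, annulusCount, tailProd]

theorem mahlerMeas_rpow_le {P : Polynomial ℤ} {n : ℕ} (hdeg : P.degree = n) (hn : n ≠ 0)
    {s R : ℝ} (hs : 1 ≤ s) (hR : 1 ≤ R) :
    mahlerMeas P ^ ((1 : ℝ) / n) ≤
      |(P.leadingCoeff : ℝ)| ^ ((1 : ℝ) / n) *
        (s * R ^ ((annulusCount P s R : ℝ) / n) * tailProd P R ^ ((1 : ℝ) / n)) := by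
  have hP : P ≠ 0 := by rintro rfl; simp at hdeg
  have hs₀ : 0 ≤ s := zero_le_one.trans hs
  have hsn : (s ^ n) ^ ((1 : ℝ) / n) = s := by
    rw [one_div, Real.pow_rpow_inv_natCast hs₀ hn]
  have hRk : (R ^ annulusCount P s R) ^ ((1 : ℝ) / n) = R ^ ((annulusCount P s R : ℝ) / n) := by
    rw [← Real.rpow_natCast, ← Real.rpow_mul (by linarith), mul_one_div]
  calc mahlerMeas P ^ ((1 : ℝ) / n)
      ≤ (|(P.leadingCoeff : ℝ)| * (s ^ n * R ^ annulusCount P s R * tailProd P R)) ^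
          ((1 : ℝ) / n) := by
        refine Real.rpow_le_rpow (zero_le_one.trans (one_le_mahlerMeas hP)) ?_ (by positivity)
        simpa [card_croots hdeg] using mahlerMeas_le (P := P) hs hR
    _ = _ := by
        rw [Real.mul_rpow (abs_nonneg _) (by positivity [tailProd_nonneg P R]),
          Real.mul_rpow (by positivity) (tailProd_nonneg P R),
          Real.mul_rpow (by positivity) (by positivity), hsn, hRk]

theorem circleAvg_eq_zero {φ : ℂ → ℝ} (h : ∀ z, ‖z‖ = 1 → φ z = 0) : circleAvg φ = 0 := by
  have hφ : ∀ t : ℝ, φ (Complex.exp (t * Complex.I)) = 0 :=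
    fun t => h _ (Complex.norm_exp_ofReal_mul_I t)
  simp only [circleAvg, hφ, intervalIntegral.integral_zero, mul_zero]

noncomputable def annulusBump (s R : ℝ) (z : ℂ) : ℝ :=
  max 0 (min ((‖z‖ - 1) / (s - 1)) (R + 1 - ‖z‖))

theorem continuous_annulusBump (s R : ℝ) : Continuous (annulusBump s R) := by
  unfold annulusBump
  fun_prop

theorem hasCompactSupport_annulusBump (s R : ℝ) : HasCompactSupport (annulusBump s R) := by
  refine HasCompactSupport.intro (isCompact_closedBall (0 : ℂ) (R + 1)) fun z hz => ?_
  rw [Metric.mem_closedBall, dist_zero_right, not_le] at hz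
  exact max_eq_left ((min_le_right _ _).trans (by linarith))

theorem annulusBump_nonneg (s R : ℝ) (z : ℂ) : 0 ≤ annulusBump s R z := le_max_left _ _

theorem annulusBump_eq_zero_of_norm_eq_one (s R : ℝ) {z : ℂ} (hz : ‖z‖ = 1) :
    annulusBump s R z = 0 := by
  simp [annulusBump, hz]

theorem one_le_annulusBump {s R : ℝ} (hs : 1 < s) {z : ℂ} (hsz : s ≤ ‖z‖) (hzR : ‖z‖ < R) :
    1 ≤ annulusBump s R z := by
  refine le_max_of_le_right (le_min ?_ (by linarith))
  rw [one_le_div (by linarith)]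
  linarith

theorem tendsto_annulusCount_div {P : ℕ → Polynomial ℤ}
    (hweak : ∀ φ : ℂ → ℝ, Continuous φ → HasCompactSupport φ →
      Tendsto (fun n => ((croots (P n)).map φ).sum / (n : ℝ)) atTop (𝓝 (circleAvg φ)))
    {s : ℝ} (hs : 1 < s) (R : ℝ) :
    Tendsto (fun n => (annulusCount (P n) s R : ℝ) / n) atTop (𝓝 0) := by
  have hbump := hweak _ (continuous_annulusBump s R) (hasCompactSupport_annulusBump s R)
  rw [circleAvg_eq_zero fun z hz => annulusBump_eq_zero_of_norm_eq_one s R hz] at hbump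
  refine tendsto_of_tendsto_of_tendsto_of_le_of_le tendsto_const_nhds hbump
    (fun n => by positivity) fun n => div_le_div_of_nonneg_right ?_ n.cast_nonneg
  exact Multiset.countP_le_sum_map _ (annulusBump_nonneg s R)
    (fun z hz => one_le_annulusBump hs hz.1 hz.2) _

theorem stmt_3_general (P : ℕ → Polynomial ℤ)
    (hdeg : ∀ n, (P n).degree = n)
    (hlead : Tendsto (fun n => |((P n).leadingCoeff : ℝ)| ^ ((1 : ℝ) / n)) atTop (𝓝 1))
    (htail : ∃ R : ℝ, 1 < R ∧
      Tendsto (fun n => tailProd (P n) R ^ ((1 : ℝ) / n)) atTop (𝓝 1))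
    (hweak : ∀ φ : ℂ → ℝ, Continuous φ → HasCompactSupport φ →
      Tendsto (fun n => ((croots (P n)).map φ).sum / (n : ℝ)) atTop (𝓝 (circleAvg φ))) :
    Tendsto (fun n => mahlerMeas (P n) ^ ((1 : ℝ) / n)) atTop (𝓝 1) := by
  obtain ⟨R, hR, htail⟩ := htail
  have hP : ∀ n, P n ≠ 0 := fun n h => by simpa [h] using hdeg n
  refine tendsto_nhds_one_of_forall_le
    (Eventually.of_forall fun n => Real.one_le_rpow (one_le_mahlerMeas (hP n)) (by positivity))
    fun s hs => ⟨_, ?_, (eventually_ne_atTop 0).mono fun n hn =>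
      mahlerMeas_rpow_le (hdeg n) hn hs.le hR.le⟩
  have hcount : Tendsto (fun n => R ^ ((annulusCount (P n) s R : ℝ) / n)) atTop (𝓝 1) := by
    simpa using tendsto_const_nhds.rpow (tendsto_annulusCount_div hweak hs R)
      (Or.inl (by positivity))
  simpa using hlead.mul ((tendsto_const_nhds.mul hcount).mul htail)

theorem stmt_3 (P : ℕ → Polynomial ℤ)
    (hdeg : ∀ n, (P n).degree = n)
    (hsimple : ∀ n, (croots (P n)).Nodup)
    (hlead : Tendsto (fun n => |((P n).leadingCoeff : ℝ)| ^ ((1 : ℝ) / n)) atTop (𝓝 1))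
    (htail : ∃ R : ℝ, 1 < R ∧
      Tendsto (fun n => tailProd (P n) R ^ ((1 : ℝ) / n)) atTop (𝓝 1))
    (hweak : ∀ φ : ℂ → ℝ, Continuous φ → HasCompactSupport φ →
      Tendsto (fun n => ((croots (P n)).map φ).sum / (n : ℝ)) atTop (𝓝 (circleAvg φ))) :
    Tendsto (fun n => mahlerMeas (P n) ^ ((1 : ℝ) / n)) atTop (𝓝 1) :=
  stmt_3_general P hdeg hlead htail hweak
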